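/- arXiv:2102.07560 — 2 statements merged into one kernel-verified Lean document; each statement's English description precedes it below -/
import Mathlib

section
/- Let Φ = (G, φ) be a connected nonempty complex unit gain graph on n vertices with minimum degree δ > 0. Then λ₁(Φ) ≤ (1/2)( δ + n − 1 − √((n − 1 − δ)² + 4) ) < δ. -/
/-!
Let `v` have degree `δ`, let `u` be a neighbour of `v` with gain `φ`, and let `d_u ≤ n - 1` be the
degree of `u`. On the vector `e_v + c φ̄ e_u` the Rayleigh quotient of `L(Φ)` is
`(δ - 2c + d_u c²) / (1 + c²)`, which is at most the Rayleigh quotient of `!![δ, -1; -1, n - 1]`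
at `(1, c)`. Taking `(1, c)` to be an eigenvector of this 2 × 2 matrix for its least eigenvalue `t`,
i.e. `c = δ - t`, gives `λ₁(Φ) ≤ t`; and `t < δ` because the off-diagonal entries are nonzero.
-/

open Matrix BigOperators ComplexConjugate

namespace Matrix

variable {ι : Type*} [Fintype ι] [DecidableEq ι]

theorem star_single_add_single_dotProduct_mulVec {R : Type*} [NonUnitalNonAssocSemiring R]
    [StarRing R] (M : Matrix ι ι R) (v u : ι) (a b : R) :
    star (Pi.single v a + Pi.single u b) ⬝ᵥ M *ᵥ (Pi.single v a + Pi.single u b) =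
      star a * (M v v * a) + star b * (M u v * a) +
        (star a * (M v u * b) + star b * (M u u * b)) := by
  simp [star_add, dotProduct_add, add_dotProduct, mulVec_add, mulVec_single, single_dotProduct]

theorem IsHermitian.re_star_single_add_single_dotProduct_mulVec {M : Matrix ι ι ℂ}
    (hM : M.IsHermitian) (v u : ι) (a b : ℂ) :
    (star (Pi.single v a + Pi.single u b) ⬝ᵥ M *ᵥ (Pi.single v a + Pi.single u b)).re =
      (star a * (M v v * a)).re + (star b * (M u u * b)).re + 2 * (star a * (M v u * b)).re := by
  have hcross : star b * (M u v * a) = star (star a * (M v u * b)) := by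
    rw [← hM.apply v u]
    simp only [star_mul, star_star, mul_assoc]
  rw [star_single_add_single_dotProduct_mulVec, hcross]
  simp only [Complex.add_re, Complex.star_def, Complex.conj_re]
  ring

theorem star_single_add_single_dotProduct_self {v u : ι} (hvu : v ≠ u) (a b : ℂ) :
    star (Pi.single v a + Pi.single u b) ⬝ᵥ (Pi.single v a + Pi.single u b) =
      star a * a + star b * b := by
  simp [star_add, dotProduct_add, hvu, hvu.symm]

theorem IsHermitian.exists_eigenvalues_mul_le [Nonempty ι] {A : Matrix ι ι ℂ}
    (hA : A.IsHermitian) (x : ι → ℂ) :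
    ∃ k, hA.eigenvalues k * (star x ⬝ᵥ x).re ≤ (star x ⬝ᵥ A *ᵥ x).re := by
  obtain ⟨k, hk⟩ := Finite.exists_min hA.eigenvalues
  refine ⟨k, ?_⟩
  set U : Matrix ι ι ℂ := (hA.eigenvectorUnitary : Matrix ι ι ℂ)
  set y := star U *ᵥ x
  have hstar : star y = star x ᵥ* U := by
    rw [star_mulVec, star_eq_conjTranspose, conjTranspose_conjTranspose]
  have hnorm : star y ⬝ᵥ y = star x ⬝ᵥ x := by
    rw [hstar, ← dotProduct_mulVec, mulVec_mulVec,
      mem_unitaryGroup_iff.mp hA.eigenvectorUnitary.2, one_mulVec]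
  have hform : star x ⬝ᵥ A *ᵥ x = ∑ j, (hA.eigenvalues j : ℂ) * (star (y j) * y j) := by
    conv_lhs => rw [hA.spectral_theorem, Unitary.conjStarAlgAut_apply]
    rw [← mulVec_mulVec, ← mulVec_mulVec, dotProduct_mulVec, ← hstar]
    refine Finset.sum_congr rfl fun j _ => ?_
    rw [mulVec_diagonal]
    exact mul_left_comm _ _ _
  have hre : ∀ z : ℂ, (star z * z).re = Complex.normSq z := fun z => by
    rw [Complex.star_def, ← Complex.normSq_eq_conj_mul_self, Complex.ofReal_re]
  rw [← hnorm, hform, dotProduct, Complex.re_sum, Complex.re_sum, Finset.mul_sum]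
  refine Finset.sum_le_sum fun j _ => ?_
  rw [Pi.star_apply, Complex.re_ofReal_mul, hre]
  exact mul_le_mul_of_nonneg_right (hk j) (Complex.normSq_nonneg _)

theorem IsHermitian.exists_eigenvalues_mul_one_add_sq_le {L : Matrix ι ι ℂ}
    (hL : L.IsHermitian) {v u : ι} (hvu : v ≠ u) (hLvu : ‖L v u‖ = 1) (c : ℝ) :
    ∃ k, hL.eigenvalues k * (1 + c ^ 2) ≤ (L v v).re - 2 * c + (L u u).re * c ^ 2 := by
  have : Nonempty ι := ⟨v⟩
  set ψ := L v u
  have hψ : ψ * conj ψ = 1 := by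
    rw [Complex.mul_conj, Complex.normSq_eq_norm_sq, hLvu]; simp
  have hb : star (-(c * conj ψ)) * -(c * conj ψ) = (c ^ 2 : ℝ) := by
    simp only [star_neg, star_mul', Complex.star_def, Complex.conj_ofReal, Complex.conj_conj]
    push_cast
    linear_combination (c : ℂ) ^ 2 * hψ
  have hcross : star 1 * (ψ * -(c * conj ψ)) = (-c : ℝ) := by
    rw [star_one, one_mul]
    push_cast
    linear_combination -(c : ℂ) * hψ
  obtain ⟨k, hk⟩ := hL.exists_eigenvalues_mul_le (Pi.single v 1 + Pi.single u (-(c * conj ψ)))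
  rw [star_single_add_single_dotProduct_self hvu, hL.re_star_single_add_single_dotProduct_mulVec,
    mul_left_comm _ (L u u), hb, hcross] at hk
  refine ⟨k, ?_⟩
  simp only [star_one, one_mul, mul_one, Complex.add_re, Complex.one_re, Complex.ofReal_re,
    Complex.re_mul_ofReal] at hk
  linarith

end Matrix

/-- The smaller root of `(a - t) * (b - t) = 1`, i.e. the least eigenvalue of `!![a, -1; -1, b]`. -/
noncomputable def lowerRoot (a b : ℝ) : ℝ := (a + b - √((b - a) ^ 2 + 4)) / 2

lemma sub_lowerRoot_mul_sub_lowerRoot (a b : ℝ) :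
    (a - lowerRoot a b) * (b - lowerRoot a b) = 1 := by
  have hs : √((b - a) ^ 2 + 4) ^ 2 = (b - a) ^ 2 + 4 := Real.sq_sqrt (by positivity)
  unfold lowerRoot
  linear_combination hs / 4

lemma lowerRoot_lt_left (a b : ℝ) : lowerRoot a b < a := by
  have : b - a < √((b - a) ^ 2 + 4) :=
    (le_abs_self _).trans_lt (Real.lt_sqrt_of_sq_lt (by rw [sq_abs]; linarith))
  unfold lowerRoot
  linarith

lemma quadForm_le_of_sub_mul_sub_eq_one {a b d t : ℝ} (h : (a - t) * (b - t) = 1) (hd : d ≤ b) :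
    a - 2 * (a - t) + d * (a - t) ^ 2 ≤ t * (1 + (a - t) ^ 2) := by
  have hc : (a - t) ^ 2 * (b - t) = a - t := by linear_combination (a - t) * h
  nlinarith [mul_le_mul_of_nonneg_left hd (sq_nonneg (a - t))]

theorem least_eigenvalue_min_degree_bound_general {n δ : ℕ}
    (G : SimpleGraph (Fin n)) [DecidableRel G.Adj]
    (A : Matrix (Fin n) (Fin n) ℂ)
    (hunit : ∀ i j, G.Adj i j → ‖A i j‖ = 1)
    (hzero : ∀ i j, ¬ G.Adj i j → A i j = 0)
    (L : Matrix (Fin n) (Fin n) ℂ)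
    (hLdef : L = Matrix.diagonal (fun i => (G.degree i : ℂ)) - A)
    (hL : L.IsHermitian)
    (hδattain : ∃ v, G.degree v = δ)
    (hδpos : 0 < δ) :
    (∃ k, hL.eigenvalues k ≤
        ((δ : ℝ) + n - 1 - Real.sqrt (((n : ℝ) - 1 - δ) ^ 2 + 4)) / 2) ∧
      ((δ : ℝ) + n - 1 - Real.sqrt (((n : ℝ) - 1 - δ) ^ 2 + 4)) / 2 < δ := by
  obtain ⟨v, hv⟩ := hδattain
  obtain ⟨u, hvu⟩ := (G.degree_pos_iff_exists_adj v).mp (hv ▸ hδpos)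
  rw [add_sub_assoc, ← lowerRoot]
  refine ⟨?_, lowerRoot_lt_left _ _⟩
  have hdiag : ∀ i, (L i i).re = G.degree i := fun i => by
    simp [hLdef, hzero i i (G.irrefl)]
  have hLvu : ‖L v u‖ = 1 := by simpa [hLdef, G.ne_of_adj hvu] using hunit v u hvu
  have hdu : (G.degree u : ℝ) ≤ n - 1 := by
    rw [le_sub_iff_add_le]
    exact_mod_cast (Fintype.card_fin n ▸ G.degree_lt_card_verts u)
  obtain ⟨k, hk⟩ := hL.exists_eigenvalues_mul_one_add_sq_le (G.ne_of_adj hvu) hLvu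
    (δ - lowerRoot δ (n - 1))
  rw [hdiag, hdiag, hv] at hk
  exact ⟨k, le_of_mul_le_mul_right (hk.trans
    (quadForm_le_of_sub_mul_sub_eq_one (sub_lowerRoot_mul_sub_lowerRoot _ _) hdu)) (by positivity)⟩

/-- For a connected nonempty gain graph with minimum degree `δ > 0`,
`λ₁(Φ) ≤ (δ + n − 1 − √((n − 1 − δ)² + 4))/2 < δ`. -/
theorem least_eigenvalue_min_degree_bound {n δ : ℕ}
    (G : SimpleGraph (Fin n)) [DecidableRel G.Adj]
    (A : Matrix (Fin n) (Fin n) ℂ)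
    (hsym : ∀ i j, A j i = star (A i j))
    (hunit : ∀ i j, G.Adj i j → ‖A i j‖ = 1)
    (hzero : ∀ i j, ¬ G.Adj i j → A i j = 0)
    (L : Matrix (Fin n) (Fin n) ℂ)
    (hLdef : L = Matrix.diagonal (fun i => (G.degree i : ℂ)) - A)
    (hL : L.IsHermitian)
    (hconn : G.Connected)
    (hδmin : ∀ v, δ ≤ G.degree v) (hδattain : ∃ v, G.degree v = δ)
    (hδpos : 0 < δ) :
    (∃ k, hL.eigenvalues k ≤
        ((δ : ℝ) + n - 1 - Real.sqrt (((n : ℝ) - 1 - δ) ^ 2 + 4)) / 2) ∧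
      ((δ : ℝ) + n - 1 - Real.sqrt (((n : ℝ) - 1 - δ) ^ 2 + 4)) / 2 < δ :=
  least_eigenvalue_min_degree_bound_general G A hunit hzero L hLdef hL hδattain hδpos
end

section
/- Let Φ be a complex unit gain graph on n ≥ 2 vertices with gain Laplacian L. For every positive integer k, λ_n(Φ) ≥ ( Tr(L^k)/n + √( (n·Tr(L^{2k}) − Tr(L^k)²)/(n²(n−1)) ) )^{1/k}, and the right-hand side converges to λ_n(Φ) as k → ∞. -/
open Matrix Filter Topology

/-!
The gain Laplacian `L = D - A` is diagonally dominant, since row `i` of `A` has at most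
`deg i` nonzero entries, each of modulus one; by Gershgorin's theorem its eigenvalues `λ_i` are
nonnegative. With `x_i = λ_i ^ k` we have `Tr L^k = ∑ x_i` and `Tr L^{2k} = ∑ x_i²`. Putting
`y_i = λ_max ^ k - x_i ≥ 0`, the numerator `n ∑ x_i² - (∑ x_i)²` equals
`n ∑ y_i² - (∑ y_i)² ≤ (n - 1) (∑ y_i)²`, and this is exactly what makes the bound at most
`λ_max ^ k`. It is also at least the mean `∑ x_i / n ≥ λ_max ^ k / n`, and `n ^ (1/k) → 1`
squeezes the `k`-th roots to `λ_max`.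
-/

namespace Matrix

variable {𝕜 ι : Type*} [RCLike 𝕜] [Fintype ι] [DecidableEq ι] {A : Matrix ι ι 𝕜}

lemma IsHermitian.hasEigenvalue_eigenvalues (hA : A.IsHermitian) (i : ι) :
    Module.End.HasEigenvalue (toLin' A) (hA.eigenvalues i : 𝕜) := by
  refine Module.End.hasEigenvalue_of_hasEigenvector (x := ⇑(hA.eigenvectorBasis i)) ⟨?_, ?_⟩
  · rw [Module.End.mem_eigenspace_iff, toLin'_apply, hA.mulVec_eigenvectorBasis,
      RCLike.real_smul_eq_coe_smul (K := 𝕜)]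
  · exact (WithLp.ofLp_eq_zero 2).ne.2 <| hA.eigenvectorBasis.orthonormal.ne_zero i

lemma IsHermitian.eigenvalues_nonneg_of_sum_norm_le_re_diag (hA : A.IsHermitian)
    (hdom : ∀ i, ∑ j ∈ Finset.univ.erase i, ‖A i j‖ ≤ RCLike.re (A i i)) (i : ι) :
    0 ≤ hA.eigenvalues i := by
  obtain ⟨j, hj⟩ := eigenvalue_mem_ball (hA.hasEigenvalue_eigenvalues i)
  rw [Metric.mem_closedBall, dist_comm, dist_eq_norm] at hj
  have := RCLike.re_le_norm (A j j - hA.eigenvalues i)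
  simp only [map_sub, RCLike.ofReal_re] at this
  linarith [hdom j]

lemma IsHermitian.trace_pow (hA : A.IsHermitian) (k : ℕ) :
    (A ^ k).trace = ∑ i, (hA.eigenvalues i : 𝕜) ^ k := by
  conv_lhs => rw [hA.spectral_theorem, ← map_pow, Unitary.conjStarAlgAut_apply, trace_mul_cycle,
    Unitary.coe_star_mul_self, one_mul, diagonal_pow, trace_diagonal]
  simp

lemma IsHermitian.re_trace_pow (hA : A.IsHermitian) (k : ℕ) :
    RCLike.re (A ^ k).trace = ∑ i, hA.eigenvalues i ^ k := by
  rw [hA.trace_pow, map_sum]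
  simp_rw [← RCLike.ofReal_pow, RCLike.ofReal_re]

end Matrix

lemma SimpleGraph.sum_norm_offDiag_le_degree {V 𝕜 : Type*} [Fintype V] [DecidableEq V]
    [RCLike 𝕜] (G : SimpleGraph V) [DecidableRel G.Adj] (A : Matrix V V 𝕜)
    (hnorm : ∀ i j, G.Adj i j → ‖A i j‖ ≤ 1) (hzero : ∀ i j, ¬ G.Adj i j → A i j = 0) (i : V) :
    ∑ j ∈ Finset.univ.erase i, ‖(diagonal (fun v => (G.degree v : 𝕜)) - A) i j‖ ≤
      RCLike.re ((diagonal (fun v => (G.degree v : 𝕜)) - A) i i) := by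
  have hoff : ∀ j ∈ Finset.univ.erase i,
      ‖(diagonal (fun v => (G.degree v : 𝕜)) - A) i j‖ ≤ if G.Adj i j then 1 else 0 := by
    intro j hj
    rw [Matrix.sub_apply, diagonal_apply_ne _ (Finset.ne_of_mem_erase hj).symm, zero_sub, norm_neg]
    split_ifs with h
    · exact hnorm i j h
    · simp [hzero i j h]
  calc _ ≤ ∑ j ∈ Finset.univ.erase i, if G.Adj i j then (1 : ℝ) else 0 := Finset.sum_le_sum hoff
    _ ≤ ∑ j, if G.Adj i j then (1 : ℝ) else 0 :=
      Finset.sum_le_sum_of_subset_of_nonneg (Finset.erase_subset _ _) fun _ _ _ => by positivity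
    _ = _ := by
      simp [hzero i i (G.irrefl), Finset.sum_boole, ← SimpleGraph.card_neighborFinset_eq_degree,
        SimpleGraph.neighborFinset_eq_filter]

section MeanAddStdErr

variable {ι : Type*} [Fintype ι]

/-- The sample mean plus the standard error `s / √n` of the mean, `s²` being the unbiased sample
variance; for `n = 1` the division by `n - 1` returns `0`, so the error term vanishes. -/
noncomputable def meanAddStdErr (x : ι → ℝ) : ℝ :=
  (∑ i, x i) / Fintype.card ι +
    √((Fintype.card ι * ∑ i, x i ^ 2 - (∑ i, x i) ^ 2) /
      ((Fintype.card ι : ℝ) ^ 2 * (Fintype.card ι - 1)))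

lemma meanAddStdErr_le [Nonempty ι] {x : ι → ℝ} {M : ℝ} (hx : ∀ i, x i ≤ M) :
    meanAddStdErr x ≤ M := by
  unfold meanAddStdErr
  set n : ℝ := (Fintype.card ι : ℝ)
  have hn : 1 ≤ n := by simp [n, Nat.one_le_iff_ne_zero, Fintype.card_ne_zero]
  set s := ∑ i, (M - x i)
  have hsum : ∑ i, x i = n * M - s := by
    simp [s, Finset.sum_sub_distrib, n]
  have hsq : n * ∑ i, x i ^ 2 - (∑ i, x i) ^ 2 = n * ∑ i, (M - x i) ^ 2 - s ^ 2 := by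
    simp only [sub_sq, Finset.sum_add_distrib, Finset.sum_sub_distrib, ← Finset.mul_sum,
      Finset.sum_const, Finset.card_univ, nsmul_eq_mul, hsum]
    ring
  have hdev : ∑ i, (M - x i) ^ 2 ≤ s ^ 2 :=
    Finset.sum_sq_le_sq_sum_of_nonneg fun i _ => sub_nonneg.2 (hx i)
  have hs : 0 ≤ s := Finset.sum_nonneg fun i _ => sub_nonneg.2 (hx i)
  have hroot : √((n * ∑ i, x i ^ 2 - (∑ i, x i) ^ 2) / (n ^ 2 * (n - 1))) ≤ s / n := by
    refine Real.sqrt_le_iff.2 ⟨by positivity, div_le_of_le_mul₀ (by nlinarith) (by positivity) ?_⟩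
    have hvar : n * ∑ i, (M - x i) ^ 2 - s ^ 2 ≤ s ^ 2 * (n - 1) := by
      nlinarith [mul_le_mul_of_nonneg_left hdev (by positivity : (0 : ℝ) ≤ n)]
    calc _ ≤ s ^ 2 * (n - 1) := hsq ▸ hvar
      _ = (s / n) ^ 2 * (n ^ 2 * (n - 1)) := by field_simp
  have hmean : (∑ i, x i) / n + s / n = M := by
    rw [hsum]; field_simp; ring
  linarith

lemma div_card_le_meanAddStdErr {x : ι → ℝ} (hx : ∀ i, 0 ≤ x i) (i : ι) :
    x i / Fintype.card ι ≤ meanAddStdErr x :=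
  le_add_of_le_of_nonneg
    (div_le_div_of_nonneg_right (Finset.single_le_sum (fun j _ => hx j) (Finset.mem_univ i))
      (Nat.cast_nonneg _))
    (Real.sqrt_nonneg _)

end MeanAddStdErr

lemma rpow_one_div_le_of_le_pow {a μ : ℝ} {k : ℕ} (ha : 0 ≤ a) (hμ : 0 ≤ μ) (hk : k ≠ 0)
    (h : a ≤ μ ^ k) : a ^ ((1 : ℝ) / k) ≤ μ := by
  rwa [one_div, Real.rpow_inv_le_iff_of_pos ha hμ (by positivity), Real.rpow_natCast]

lemma tendsto_rpow_one_div_of_pow_bounds {F : ℕ → ℝ} {μ c : ℝ} (hμ : 0 ≤ μ) (hc : 0 < c)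
    (hlow : ∀ k, c * μ ^ k ≤ F k) (hup : ∀ k, F k ≤ μ ^ k) :
    Tendsto (fun k : ℕ => F k ^ ((1 : ℝ) / k)) atTop (𝓝 μ) := by
  have hF : ∀ k, 0 ≤ F k := fun k => (by positivity : 0 ≤ c * μ ^ k).trans (hlow k)
  have hroot : Tendsto (fun k : ℕ => c ^ ((1 : ℝ) / k) * μ) atTop (𝓝 μ) := by
    simpa using ((tendsto_const_nhds (x := c)).rpow tendsto_one_div_atTop_nhds_zero_nat
      (Or.inl hc.ne')).mul_const μ
  refine tendsto_of_tendsto_of_tendsto_of_le_of_le' hroot tendsto_const_nhds ?_ ?_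
  · filter_upwards [eventually_ne_atTop 0] with k hk
    calc c ^ ((1 : ℝ) / k) * μ = (c * μ ^ k) ^ ((1 : ℝ) / k) := by
          rw [Real.mul_rpow hc.le (by positivity), one_div, Real.pow_rpow_inv_natCast hμ hk]
      _ ≤ F k ^ ((1 : ℝ) / k) := by gcongr; exact hlow k
  · filter_upwards [eventually_ne_atTop 0] with k hk
    exact rpow_one_div_le_of_le_pow (hF k) hμ hk (hup k)

theorem largest_eigenvalue_trace_bound_general {n : ℕ}
    (G : SimpleGraph (Fin n)) [DecidableRel G.Adj]
    (A : Matrix (Fin n) (Fin n) ℂ)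
    (hunit : ∀ i j, G.Adj i j → ‖A i j‖ = 1)
    (hzero : ∀ i j, ¬ G.Adj i j → A i j = 0)
    (L : Matrix (Fin n) (Fin n) ℂ)
    (hLdef : L = Matrix.diagonal (fun i => (G.degree i : ℂ)) - A)
    (hL : L.IsHermitian)
    (hn : 2 ≤ n) :
    (∀ k : ℕ, 1 ≤ k →
      (((L ^ k).trace.re / n +
        Real.sqrt ((n * (L ^ (2 * k)).trace.re - ((L ^ k).trace.re) ^ 2) /
          ((n : ℝ) ^ 2 * (n - 1)))) ^ ((1 : ℝ) / k)) ≤ ⨆ j, hL.eigenvalues j) ∧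
    Tendsto (fun k : ℕ =>
        ((L ^ k).trace.re / n +
          Real.sqrt ((n * (L ^ (2 * k)).trace.re - ((L ^ k).trace.re) ^ 2) /
            ((n : ℝ) ^ 2 * (n - 1)))) ^ ((1 : ℝ) / k)) atTop
      (𝓝 (⨆ j, hL.eigenvalues j)) := by
  have : Nonempty (Fin n) := ⟨⟨0, by omega⟩⟩
  have heig : ∀ i, 0 ≤ hL.eigenvalues i := hL.eigenvalues_nonneg_of_sum_norm_le_re_diag
    (hLdef ▸ G.sum_norm_offDiag_le_degree A (fun i j h => (hunit i j h).le) hzero)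
  obtain ⟨j, hj⟩ := Finite.exists_max hL.eigenvalues
  have hsup : ⨆ i, hL.eigenvalues i = hL.eigenvalues j :=
    le_antisymm (ciSup_le hj) (le_ciSup (Finite.bddAbove_range _) j)
  have hbound : ∀ k : ℕ, (L ^ k).trace.re / n +
      √((n * (L ^ (2 * k)).trace.re - ((L ^ k).trace.re) ^ 2) / ((n : ℝ) ^ 2 * (n - 1))) =
      meanAddStdErr (fun i => hL.eigenvalues i ^ k) := fun k => by
    simp only [meanAddStdErr, Fintype.card_fin, ← RCLike.re_eq_complex_re, hL.re_trace_pow]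
    simp only [pow_mul']
  simp only [hbound, hsup]
  have hup : ∀ k, meanAddStdErr (fun i => hL.eigenvalues i ^ k) ≤ hL.eigenvalues j ^ k :=
    fun k => meanAddStdErr_le fun i => pow_le_pow_left₀ (heig i) (hj i) k
  have hlow : ∀ k, (n : ℝ)⁻¹ * hL.eigenvalues j ^ k ≤
      meanAddStdErr (fun i => hL.eigenvalues i ^ k) := fun k => by
    simpa [div_eq_inv_mul] using div_card_le_meanAddStdErr (fun i => pow_nonneg (heig i) k) j
  refine ⟨fun k hk => rpow_one_div_le_of_le_pow ?_ (heig j) (by omega) (hup k),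
    tendsto_rpow_one_div_of_pow_bounds (heig j) (by positivity) hlow hup⟩
  exact (mul_nonneg (by positivity) (pow_nonneg (heig j) k)).trans (hlow k)

/-- Trace bound for the largest gain Laplacian eigenvalue: for every `k ≥ 1`,
`λ_n(Φ) ≥ (Tr(L^k)/n + √((n·Tr(L^{2k}) − Tr(L^k)²)/(n²(n−1))))^{1/k}`, and the
right-hand side converges to `λ_n(Φ)` as `k → ∞`. -/
theorem largest_eigenvalue_trace_bound {n : ℕ}
    (G : SimpleGraph (Fin n)) [DecidableRel G.Adj]
    (A : Matrix (Fin n) (Fin n) ℂ)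
    (hsym : ∀ i j, A j i = star (A i j))
    (hunit : ∀ i j, G.Adj i j → ‖A i j‖ = 1)
    (hzero : ∀ i j, ¬ G.Adj i j → A i j = 0)
    (L : Matrix (Fin n) (Fin n) ℂ)
    (hLdef : L = Matrix.diagonal (fun i => (G.degree i : ℂ)) - A)
    (hL : L.IsHermitian)
    (hn : 2 ≤ n) :
    (∀ k : ℕ, 1 ≤ k →
      (((L ^ k).trace.re / n +
        Real.sqrt ((n * (L ^ (2 * k)).trace.re - ((L ^ k).trace.re) ^ 2) /
          ((n : ℝ) ^ 2 * (n - 1)))) ^ ((1 : ℝ) / k)) ≤ ⨆ j, hL.eigenvalues j) ∧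
    Tendsto (fun k : ℕ =>
        ((L ^ k).trace.re / n +
          Real.sqrt ((n * (L ^ (2 * k)).trace.re - ((L ^ k).trace.re) ^ 2) /
            ((n : ℝ) ^ 2 * (n - 1)))) ^ ((1 : ℝ) / k)) atTop
      (𝓝 (⨆ j, hL.eigenvalues j)) :=
  largest_eigenvalue_trace_bound_general G A hunit hzero L hLdef hL hn
end
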